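/- arXiv:1012.4657 — 4 statements merged into one kernel-verified Lean document; each statement's English description precedes it below -/
import Mathlib

section
/- Let S be a closed symmetric operator in a Hilbert space H, let 𝒪 ⊂ ℂ⁺ be open and 𝒪* = {λ̄ : λ ∈ 𝒪}, and set M = ⋂_{λ ∈ 𝒪 ∪ 𝒪*} ran(S - λ). Then M is invariant under S in the sense that if u ∈ M ∩ dom S then S u ∈ M. -/
open scoped ComplexConjugate
local notation "⟪" x ", " y "⟫" => @inner ℂ _ _ x y

/-- If `(f - λ) x = u` with `u ∈ dom f`, then `(f - λ) (u + λ x) = f u`. -/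
theorem LinearPMap.exists_sub_smul_eq_apply {R E : Type*} [CommRing R] [AddCommGroup E]
    [Module R E] (f : E →ₗ.[R] E) (lam : R) (u : f.domain)
    (hu : ∃ x : f.domain, f x - lam • (x : E) = u) :
    ∃ x : f.domain, f x - lam • (x : E) = f u := by
  obtain ⟨x, hx⟩ := hu
  refine ⟨u + lam • x, ?_⟩
  rw [f.map_add, f.map_smul, Submodule.coe_add, Submodule.coe_smul, ← hx]
  module

theorem inter_ranges_invariant_general
    {H : Type*} [NormedAddCommGroup H] [InnerProductSpace ℂ H]
    (S : H →ₗ.[ℂ] H)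
    (O : Set ℂ)
    (M : Set H)
    (hM : M = ⋂ lam ∈ O ∪ (fun z => conj z) '' O,
      {y : H | ∃ x : S.domain, S x - lam • (x : H) = y})
    (u : S.domain) (hu : (u : H) ∈ M) :
    S u ∈ M := by
  subst hM
  simp only [Set.mem_iInter, Set.mem_ofPred_eq] at hu ⊢
  exact fun lam hlam => S.exists_sub_smul_eq_apply lam u (hu lam hlam)

/-- Let `S` be a closed symmetric operator in a Hilbert space `H`, let
`𝒪 ⊆ ℂ⁺` be open, `𝒪* = {conj λ : λ ∈ 𝒪}`, and `M = ⋂_{λ ∈ 𝒪 ∪ 𝒪*} ran (S - λ)`.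
Then `M` is invariant under `S`: if `u ∈ M ∩ dom S` then `S u ∈ M`. -/
theorem inter_ranges_invariant
    {H : Type*} [NormedAddCommGroup H] [InnerProductSpace ℂ H] [CompleteSpace H]
    (S : H →ₗ.[ℂ] H)
    (hsym : ∀ x y : S.domain, ⟪S x, (y : H)⟫ = ⟪(x : H), S y⟫)
    (hclosed : S.IsClosed)
    (O : Set ℂ) (hO : IsOpen O) (hOup : ∀ lam ∈ O, 0 < lam.im)
    (M : Set H)
    (hM : M = ⋂ lam ∈ O ∪ (fun z => conj z) '' O,
      {y : H | ∃ x : S.domain, S x - lam • (x : H) = y})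
    (u : S.domain) (hu : (u : H) ∈ M) :
    S u ∈ M :=
  inter_ranges_invariant_general S O M hM u hu
end

section
/- Let S be a closed symmetric operator in a Hilbert space H, let 𝒪 ⊂ ℂ⁺ be open and nonempty, 𝒪* its complex conjugate set, and M = ⋂_{λ ∈ 𝒪 ∪ 𝒪*} ran(S - λ). Then the restriction S_M = S ↾ (M ∩ dom S) is a selfadjoint operator in the Hilbert space M; in particular, for every ν ∈ 𝒪 one has ran(S_M - ν) = M = ran(S_M - ν̄). -/
/-!
Symmetry gives `|Im μ| ‖x‖ ≤ ‖(S - μ) x‖`, so for nonreal `μ` the range of the closed operator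
`S - μ` is closed. Let `y = (S - ν) x ∈ M`. For `μ ≠ ν` both `y` and `(S - μ) x` lie in
`ran (S - μ)`, hence so does their difference `(μ - ν) x`. For `μ = ν`, solve `(S - μ) z = y`
for `μ ∈ 𝒪 ∪ 𝒪*` close to `ν`: then `z ∈ ran (S - ν)` by the previous case, and
`(S - ν) (x - z) = (ν - μ) z` gives `‖x - z‖ ≤ |ν - μ| ‖y‖ / (|Im ν| |Im μ|)`, so `x` lies in the
closed set `ran (S - ν)`.
-/

open scoped ComplexConjugate
local notation "⟪" x ", " y "⟫" => @inner ℂ _ _ x y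

open scoped Topology
open Filter

namespace LinearPMap

section Algebraic

variable {𝕜 E : Type*} [Field 𝕜] [AddCommGroup E] [Module 𝕜 E] (T : E →ₗ.[𝕜] E)

def rangeSub (μ : 𝕜) : Submodule 𝕜 E :=
  LinearMap.range (T.toFun - μ • T.domain.subtype)

variable {T}

theorem mem_rangeSub {μ : 𝕜} {z : E} : z ∈ T.rangeSub μ ↔ ∃ x : T.domain, T x - μ • (x : E) = z :=
  Iff.rfl

theorem sub_smul_mem_rangeSub (μ : 𝕜) {x : T.domain} {l : 𝕜} (hx : (x : E) ∈ T.rangeSub l) :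
    T x - μ • (x : E) ∈ T.rangeSub l := by
  have hx' : T x - l • (x : E) ∈ T.rangeSub l := ⟨x, rfl⟩
  have hsplit : T x - μ • (x : E) = (T x - l • (x : E)) + (l - μ) • (x : E) := by
    rw [sub_smul]; abel
  rw [hsplit]
  exact add_mem hx' (Submodule.smul_mem _ _ hx)

theorem mem_rangeSub_of_sub_smul_mem {μ l : 𝕜} (h : μ ≠ l) {x : T.domain}
    (hx : T x - μ • (x : E) ∈ T.rangeSub l) : (x : E) ∈ T.rangeSub l := by
  have hx' : T x - l • (x : E) ∈ T.rangeSub l := ⟨x, rfl⟩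
  have hsplit : (x : E) = (μ - l)⁻¹ • ((T x - l • (x : E)) - (T x - μ • (x : E))) := by
    rw [sub_sub_sub_cancel_left, ← sub_smul, inv_smul_smul₀ (sub_ne_zero.mpr h)]
  rw [hsplit]
  exact Submodule.smul_mem _ _ (sub_mem hx' hx)

variable (T) in
def biInterRangeSub (Ω : Set 𝕜) : Set E :=
  ⋂ μ ∈ Ω, (T.rangeSub μ : Set E)

theorem sub_smul_mem_biInterRangeSub {Ω : Set 𝕜} (μ : 𝕜) {x : T.domain}
    (hx : (x : E) ∈ T.biInterRangeSub Ω) : T x - μ • (x : E) ∈ T.biInterRangeSub Ω :=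
  Set.mem_iInter₂.mpr fun l hl => sub_smul_mem_rangeSub μ (Set.mem_iInter₂.mp hx l hl)

theorem apply_mem_biInterRangeSub {Ω : Set 𝕜} {x : T.domain}
    (hx : (x : E) ∈ T.biInterRangeSub Ω) : T x ∈ T.biInterRangeSub Ω := by
  simpa using sub_smul_mem_biInterRangeSub 0 hx

end Algebraic

section Hilbert

variable {H : Type*} [NormedAddCommGroup H] [InnerProductSpace ℂ H] {T : H →ₗ.[ℂ] H}

theorem IsFormalAdjoint.inner_self_apply_im (hT : T.IsFormalAdjoint T) (x : T.domain) :
    (⟪T x, (x : H)⟫).im = 0 := by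
  have h := congrArg Complex.im (hT x x)
  rw [← inner_conj_symm (x : H), Complex.conj_im] at h
  linarith

theorem IsFormalAdjoint.abs_im_mul_norm_le (hT : T.IsFormalAdjoint T) (μ : ℂ) (x : T.domain) :
    |μ.im| * ‖(x : H)‖ ≤ ‖T x - μ • (x : H)‖ := by
  have him : (⟪T x - μ • (x : H), (x : H)⟫).im = μ.im * ‖(x : H)‖ ^ 2 := by
    rw [inner_sub_left, inner_smul_left, Complex.sub_im,
      hT.inner_self_apply_im, inner_self_eq_norm_sq_to_K]
    simp [Complex.mul_im, sq]
  have hcs : |μ.im| * ‖(x : H)‖ ^ 2 ≤ ‖T x - μ • (x : H)‖ * ‖(x : H)‖ := by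
    calc |μ.im| * ‖(x : H)‖ ^ 2 = |(⟪T x - μ • (x : H), (x : H)⟫).im| := by
          rw [him, abs_mul, abs_of_nonneg (sq_nonneg ‖(x : H)‖)]
      _ ≤ ‖⟪T x - μ • (x : H), (x : H)⟫‖ := Complex.abs_im_le_norm _
      _ ≤ ‖T x - μ • (x : H)‖ * ‖(x : H)‖ := norm_inner_le_norm _ _
  rcases (norm_nonneg (x : H)).eq_or_lt with hzero | hpos
  · rw [← hzero, mul_zero]; exact norm_nonneg _
  · nlinarith

variable [CompleteSpace H]

theorem IsFormalAdjoint.isClosed_rangeSub (hT : T.IsFormalAdjoint T) (hc : T.IsClosed) {μ : ℂ}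
    (hμ : μ.im ≠ 0) : _root_.IsClosed (T.rangeSub μ : Set H) := by
  refine IsSeqClosed.isClosed fun y p hy hp => ?_
  choose x hx using fun n => mem_rangeSub.mp (hy n)
  have hbound : ∀ m n, |μ.im| * dist (x m : H) (x n) ≤ dist (y m) (y n) := fun m n => by
    have h := hT.abs_im_mul_norm_le μ (x m - x n)
    rwa [map_sub, Submodule.coe_sub, smul_sub, sub_sub_sub_comm, hx, hx, ← dist_eq_norm,
      ← dist_eq_norm] at h
  have hcau : CauchySeq fun n => (x n : H) := by
    refine Metric.cauchySeq_iff.mpr fun ε hε => ?_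
    obtain ⟨N, hN⟩ := Metric.cauchySeq_iff.mp hp.cauchySeq (|μ.im| * ε) (by positivity)
    refine ⟨N, fun m hm n hn => lt_of_mul_lt_mul_left ?_ (abs_nonneg μ.im)⟩
    exact (hbound m n).trans_lt (hN m hm n hn)
  obtain ⟨q, hq⟩ := cauchySeq_tendsto_of_complete hcau
  have hTx : Tendsto (fun n => T (x n)) atTop (𝓝 (p + μ • q)) := by
    have : (fun n => T (x n)) = fun n => y n + μ • (x n : H) := by
      funext n; rw [← hx n, sub_add_cancel]
    exact this ▸ hp.add (hq.const_smul μ)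
  obtain ⟨u, hu, hTu⟩ := T.mem_graph_iff.mp <|
    hc.mem_of_tendsto (hq.prodMk_nhds hTx) (Eventually.of_forall fun n => T.mem_graph (x n))
  exact mem_rangeSub.mpr ⟨u, by rw [hTu, hu, add_sub_cancel_right]⟩

theorem IsFormalAdjoint.mem_rangeSub_of_frequently (hT : T.IsFormalAdjoint T) (hc : T.IsClosed)
    {ν : ℂ} (hν : ν.im ≠ 0) {x : T.domain}
    (h : ∃ᶠ μ in 𝓝[≠] ν, T x - ν • (x : H) ∈ T.rangeSub μ) : (x : H) ∈ T.rangeSub ν := by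
  set y := T x - ν • (x : H) with hy
  rw [← SetLike.mem_coe, ← (hT.isClosed_rangeSub hc hν).closure_eq, Metric.mem_closure_iff]
  intro ε hε
  set g : ℂ → ℝ := fun μ => ‖ν - μ‖ * ‖y‖ / (|ν.im| * |μ.im|)
  have hg : Tendsto g (𝓝[≠] ν) (𝓝 0) := by
    have hcont : ContinuousAt g ν := ContinuousAt.div (by fun_prop) (by fun_prop) (by positivity)
    simpa [g] using hcont.tendsto.mono_left nhdsWithin_le_nhds
  have him : ∀ᶠ μ in 𝓝[≠] ν, μ.im ≠ 0 :=
    nhdsWithin_le_nhds (Complex.continuous_im.continuousAt.eventually_ne hν)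
  obtain ⟨μ, hyμ, ⟨hμν, hμ⟩, hgμ⟩ := (h.and_eventually ((eventually_mem_nhdsWithin.and him).and
    (hg.eventually (gt_mem_nhds hε)))).exists
  obtain ⟨z, hz⟩ := mem_rangeSub.mp hyμ
  refine ⟨z, mem_rangeSub_of_sub_smul_mem hμν (hz ▸ (⟨x, rfl⟩ : y ∈ T.rangeSub ν)), ?_⟩
  have hxz : |ν.im| * ‖(x : H) - z‖ ≤ ‖ν - μ‖ * ‖(z : H)‖ := by
    have h := hT.abs_im_mul_norm_le ν (x - z)
    rwa [map_sub, Submodule.coe_sub, smul_sub, sub_sub_sub_comm, ← hy, ← hz,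
      sub_sub_sub_cancel_left, ← sub_smul, norm_smul] at h
  have hzy : |μ.im| * ‖(z : H)‖ ≤ ‖y‖ := hz ▸ hT.abs_im_mul_norm_le μ z
  calc dist (x : H) z ≤ g μ := by
        rw [dist_eq_norm, le_div_iff₀ (by positivity)]
        nlinarith [mul_le_mul_of_nonneg_right hxz (abs_nonneg μ.im),
          mul_le_mul_of_nonneg_left hzy (norm_nonneg (ν - μ))]
    _ < ε := hgμ

theorem IsFormalAdjoint.mem_biInterRangeSub_of_sub_smul_mem (hT : T.IsFormalAdjoint T)
    (hc : T.IsClosed) {Ω : Set ℂ} (hΩ : IsOpen Ω) (hΩim : ∀ μ ∈ Ω, μ.im ≠ 0) {ν : ℂ} (hν : ν ∈ Ω)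
    {x : T.domain} (hx : T x - ν • (x : H) ∈ T.biInterRangeSub Ω) :
    (x : H) ∈ T.biInterRangeSub Ω := by
  refine Set.mem_iInter₂.mpr fun μ hμ => ?_
  obtain rfl | hμν := eq_or_ne μ ν
  · refine hT.mem_rangeSub_of_frequently hc (hΩim μ hμ) (Eventually.frequently ?_)
    filter_upwards [nhdsWithin_le_nhds (hΩ.mem_nhds hμ)] with l hl
    exact Set.mem_iInter₂.mp hx l hl
  · exact mem_rangeSub_of_sub_smul_mem hμν.symm (Set.mem_iInter₂.mp hx μ hμ)

theorem IsFormalAdjoint.range_restrict_sub_smul (hT : T.IsFormalAdjoint T) (hc : T.IsClosed)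
    {Ω : Set ℂ} (hΩ : IsOpen Ω) (hΩim : ∀ μ ∈ Ω, μ.im ≠ 0) {ν : ℂ} (hν : ν ∈ Ω) :
    {y : H | ∃ x : T.domain, (x : H) ∈ T.biInterRangeSub Ω ∧ T x - ν • (x : H) = y} =
      T.biInterRangeSub Ω := by
  refine Set.Subset.antisymm ?_ fun y hy => ?_
  · rintro _ ⟨x, hx, rfl⟩
    exact sub_smul_mem_biInterRangeSub ν hx
  · obtain ⟨x, rfl⟩ := mem_rangeSub.mp (Set.mem_iInter₂.mp hy ν hν)
    exact ⟨x, hT.mem_biInterRangeSub_of_sub_smul_mem hc hΩ hΩim hν hy, rfl⟩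

end Hilbert

end LinearPMap

theorem restriction_to_inter_ranges_selfadjoint_general
    {H : Type*} [NormedAddCommGroup H] [InnerProductSpace ℂ H] [CompleteSpace H]
    (S : H →ₗ.[ℂ] H)
    (hsym : ∀ x y : S.domain, ⟪S x, (y : H)⟫ = ⟪(x : H), S y⟫)
    (hclosed : S.IsClosed)
    (O : Set ℂ) (hO : IsOpen O) (hOup : ∀ lam ∈ O, 0 < lam.im)
    (M : Set H)
    (hM : M = ⋂ lam ∈ O ∪ (fun z => conj z) '' O,
      {y : H | ∃ x : S.domain, S x - lam • (x : H) = y}) :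
    (∀ u : S.domain, (u : H) ∈ M → S u ∈ M) ∧
    (∀ nu ∈ O,
      {y : H | ∃ x : S.domain, (x : H) ∈ M ∧ S x - nu • (x : H) = y} = M ∧
      {y : H | ∃ x : S.domain, (x : H) ∈ M ∧ S x - (conj nu) • (x : H) = y} = M) := by
  have hS : S.IsFormalAdjoint S := hsym
  set Ω := O ∪ (fun z => conj z) '' O
  have hΩ : IsOpen Ω := hO.union (Complex.conjCLE.toHomeomorph.isOpenMap O hO)
  have hΩim : ∀ μ ∈ Ω, μ.im ≠ 0 := by
    rintro μ (hμ | ⟨w, hw, rfl⟩)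
    exacts [(hOup μ hμ).ne', by simpa using (hOup w hw).ne']
  obtain rfl : M = S.biInterRangeSub Ω := hM
  exact ⟨fun _ => LinearPMap.apply_mem_biInterRangeSub, fun ν hν =>
    ⟨hS.range_restrict_sub_smul hclosed hΩ hΩim (Or.inl hν),
      hS.range_restrict_sub_smul hclosed hΩ hΩim (Or.inr ⟨ν, hν, rfl⟩)⟩⟩

/-- Let `S` be a closed symmetric operator in a Hilbert space `H`, let
`𝒪 ⊆ ℂ⁺` be open and nonempty, `𝒪*` its conjugate set, and
`M = ⋂_{λ ∈ 𝒪 ∪ 𝒪*} ran (S - λ)`.  Then the restriction `S_M = S ↾ (M ∩ dom S)` is a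
selfadjoint operator in the Hilbert space `M`: it maps `M ∩ dom S` into `M`, it is
symmetric, and (the range criterion for selfadjointness of a symmetric operator) for every
`ν ∈ 𝒪` one has `ran (S_M - ν) = M = ran (S_M - conj ν)`. -/
theorem restriction_to_inter_ranges_selfadjoint
    {H : Type*} [NormedAddCommGroup H] [InnerProductSpace ℂ H] [CompleteSpace H]
    (S : H →ₗ.[ℂ] H)
    (hsym : ∀ x y : S.domain, ⟪S x, (y : H)⟫ = ⟪(x : H), S y⟫)
    (hclosed : S.IsClosed)
    (O : Set ℂ) (hO : IsOpen O) (hOne : O.Nonempty) (hOup : ∀ lam ∈ O, 0 < lam.im)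
    (M : Set H)
    (hM : M = ⋂ lam ∈ O ∪ (fun z => conj z) '' O,
      {y : H | ∃ x : S.domain, S x - lam • (x : H) = y}) :
    (∀ u : S.domain, (u : H) ∈ M → S u ∈ M) ∧
    (∀ nu ∈ O,
      {y : H | ∃ x : S.domain, (x : H) ∈ M ∧ S x - nu • (x : H) = y} = M ∧
      {y : H | ∃ x : S.domain, (x : H) ∈ M ∧ S x - (conj nu) • (x : H) = y} = M) :=
  restriction_to_inter_ranges_selfadjoint_general S hsym hclosed O hO hOup M hM
end

section
/- Let A₁, A₂ be selfadjoint operators in a Hilbert space H, and suppose there exist families of vectors such that span{γ₁(λ)φ : φ ∈ Φ, λ ∈ ℂ \ ℝ} and span{γ₂(λ)φ : φ ∈ Φ, λ ∈ ℂ \ ℝ} are dense in H, where γᵢ(λ) = (I + (λ-μ)(Aᵢ-λ)^{-1})γᵢ(μ) for all λ, μ ∈ ℂ \ ℝ, and (γ₁(λ)φ, γ₁(μ)ψ) = (γ₂(λ)φ, γ₂(μ)ψ) for all λ, μ ∈ ℂ \ ℝ and all φ, ψ ∈ Φ. Then the map V: Σⱼ γ₁(λⱼ)φⱼ ↦ Σⱼ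 γ₂(λⱼ)φⱼ is well-defined and isometric, its closure U is a unitary operator on H, U(A₁-λ)^{-1} = (A₂-λ)^{-1}U for all λ ∈ ℂ \ ℝ, and A₁ and A₂ are unitarily equivalent. -/
/-!
The vectors `(γ₁(λ)φ, γ₂(λ)φ)` span a subspace of `H × H` on which, by the assumption on inner
products, both projections are isometric; its closure is therefore the graph of a unitary `U`
with `U γ₁(λ)φ = γ₂(λ)φ` (surjectivity of the projections comes from the dense spans).
For `μ ≠ λ` the resolvent identity expresses `(Aᵢ - λ)⁻¹ γᵢ(μ)φ` through `γᵢ(λ)φ` and `γᵢ(μ)φ`,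
so `U` intertwines the resolvents on these vectors; the remaining vectors `γ₁(λ)φ` are limits of
such, since the identity `γ₁(λ) = (1 + (λ - μ)(A₁ - λ)⁻¹) γ₁(μ)`, with the bounded operator
`(A₁ - λ)⁻¹` fixed, makes `γ₁(·)φ` continuous at `λ`.
Intertwining one resolvent is the same as intertwining the operators themselves.
-/

open Filter Topology Submodule

local notation "⟪" x ", " y "⟫" => @inner ℂ _ _ x y

theorem LinearIsometry.surjective_of_dense_span_subset_range {𝕜 E F : Type*} [RCLike 𝕜]
    [NormedAddCommGroup E] [NormedSpace 𝕜 E] [CompleteSpace E]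
    [NormedAddCommGroup F] [NormedSpace 𝕜 F] (f : E →ₗᵢ[𝕜] F) {s : Set F}
    (hs : Dense (span 𝕜 s : Set F)) (hsf : s ⊆ Set.range f) : Function.Surjective f := by
  have hdense : Dense (Set.range f) :=
    hs.mono (span_le (p := LinearMap.range f.toLinearMap) |>.2 hsf)
  have hclosed : IsClosed (Set.range f) := f.isometry.isClosedEmbedding.isClosed_range
  exact Set.range_eq_univ.1 (hdense.closure_eq ▸ hclosed.closure_eq).symm

section InnerGraph

variable {𝕜 E F : Type*} [RCLike 𝕜] [NormedAddCommGroup E] [InnerProductSpace 𝕜 E]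
  [NormedAddCommGroup F] [InnerProductSpace 𝕜 F]

theorem inner_fst_eq_inner_snd_of_mem_topologicalClosure_span {S : Set (E × F)}
    (hS : ∀ p ∈ S, ∀ q ∈ S, inner 𝕜 p.1 q.1 = inner 𝕜 p.2 q.2) {p q : E × F}
    (hp : p ∈ (span 𝕜 S).topologicalClosure) (hq : q ∈ (span 𝕜 S).topologicalClosure) :
    inner 𝕜 p.1 q.1 = inner 𝕜 p.2 q.2 := by
  have extend : ∀ p : E × F, (∀ s ∈ S, inner 𝕜 p.1 s.1 = inner 𝕜 p.2 s.2) →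
      ∀ q ∈ (span 𝕜 S).topologicalClosure, inner 𝕜 p.1 q.1 = inner 𝕜 p.2 q.2 := by
    intro p hp q hq
    let L : E × F →L[𝕜] 𝕜 := (innerSL 𝕜 p.1).comp (.fst 𝕜 E F) - (innerSL 𝕜 p.2).comp (.snd 𝕜 E F)
    have hle : (span 𝕜 S).topologicalClosure ≤ (L : E × F →ₗ[𝕜] 𝕜).ker :=
      topologicalClosure_minimal _ (span_le.2 fun s hs ↦ by simp [L, hp s hs]) L.isClosed_ker
    simpa [L, sub_eq_zero] using hle hq
  refine extend p (fun s hs ↦ ?_) q hq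
  rw [← inner_conj_symm, extend s (hS s hs) p hp, inner_conj_symm]

theorem norm_fst_eq_norm_snd_of_mem_topologicalClosure_span {S : Set (E × F)}
    (hS : ∀ p ∈ S, ∀ q ∈ S, inner 𝕜 p.1 q.1 = inner 𝕜 p.2 q.2) {p : E × F}
    (hp : p ∈ (span 𝕜 S).topologicalClosure) : ‖p.1‖ = ‖p.2‖ := by
  have h := congrArg RCLike.re (inner_fst_eq_inner_snd_of_mem_topologicalClosure_span hS hp hp)
  rw [← norm_sq_eq_re_inner, ← norm_sq_eq_re_inner] at h
  exact (pow_left_inj₀ (norm_nonneg _) (norm_nonneg _) two_ne_zero).1 h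

theorem exists_linearIsometryEquiv_apply_eq_of_inner_eq {ι : Type*} [CompleteSpace E]
    [CompleteSpace F] (v : ι → E) (w : ι → F)
    (hv : Dense (span 𝕜 (Set.range v) : Set E)) (hw : Dense (span 𝕜 (Set.range w) : Set F))
    (h : ∀ i j, inner 𝕜 (v i) (v j) = inner 𝕜 (w i) (w j)) :
    ∃ U : E ≃ₗᵢ[𝕜] F, ∀ i, U (v i) = w i := by
  set G := (span 𝕜 (Set.range fun i ↦ (v i, w i))).topologicalClosure
  have hnorm (p : G) : ‖(p : E × F).1‖ = ‖(p : E × F).2‖ :=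
    norm_fst_eq_norm_snd_of_mem_topologicalClosure_span
      (by rintro _ ⟨i, rfl⟩ _ ⟨j, rfl⟩; exact h i j) p.2
  have hmem (i : ι) : (v i, w i) ∈ G := le_topologicalClosure _ (subset_span ⟨i, rfl⟩)
  have : CompleteSpace G := (span 𝕜 _).isClosed_topologicalClosure.completeSpace_coe
  let fst : G →ₗᵢ[𝕜] E :=
    { toLinearMap := (LinearMap.fst 𝕜 E F).comp G.subtype
      norm_map' := fun p ↦ by simp [Prod.norm_def, hnorm p] }
  let snd : G →ₗᵢ[𝕜] F :=
    { toLinearMap := (LinearMap.snd 𝕜 E F).comp G.subtype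
      norm_map' := fun p ↦ by simp [Prod.norm_def, hnorm p] }
  have hfst := fst.surjective_of_dense_span_subset_range hv (by
    rintro _ ⟨i, rfl⟩; exact ⟨⟨_, hmem i⟩, rfl⟩)
  have hsnd := snd.surjective_of_dense_span_subset_range hw (by
    rintro _ ⟨i, rfl⟩; exact ⟨⟨_, hmem i⟩, rfl⟩)
  refine ⟨(LinearIsometryEquiv.ofSurjective fst hfst).symm.trans
    (LinearIsometryEquiv.ofSurjective snd hsnd), fun i ↦ ?_⟩
  have hsymm : (LinearIsometryEquiv.ofSurjective fst hfst).symm (v i) = ⟨_, hmem i⟩ :=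
    (LinearIsometryEquiv.symm_apply_eq _).2 rfl
  rw [LinearIsometryEquiv.trans_apply, hsymm]; rfl

end InnerGraph

theorem continuousAt_of_eq_add_smul_apply {𝕜 E : Type*} [NontriviallyNormedField 𝕜]
    [NormedAddCommGroup E] [NormedSpace 𝕜 E] {f : 𝕜 → E} {z : 𝕜} (T : E →L[𝕜] E)
    (h : ∀ᶠ w in 𝓝 z, f z = f w + (z - w) • T (f w)) : ContinuousAt f z := by
  have hsmall : ∀ᶠ w in 𝓝 z, ‖z - w‖ * ‖T‖ ≤ 1 / 2 := by
    have : Tendsto (fun w ↦ ‖z - w‖ * ‖T‖) (𝓝 z) (𝓝 0) := by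
      simpa using (((continuous_const (y := z)).sub continuous_id).norm.mul_const ‖T‖).tendsto z
    exact this.eventually (ge_mem_nhds (by norm_num))
  have hbdd : ∀ᶠ w in 𝓝 z, ‖T (f w)‖ ≤ ‖T‖ * (2 * ‖f z‖) := by
    filter_upwards [h, hsmall] with w hw hs
    have : ‖f w‖ ≤ ‖f z‖ + ‖z - w‖ * ‖T‖ * ‖f w‖ :=
      calc ‖f w‖ = ‖f z - (z - w) • T (f w)‖ := by rw [hw, add_sub_cancel_right]
        _ ≤ ‖f z‖ + ‖z - w‖ * (‖T‖ * ‖f w‖) :=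
          (norm_sub_le _ _).trans (by rw [norm_smul]; gcongr; exact T.le_opNorm _)
        _ = _ := by ring
    exact T.le_opNorm_of_le (by nlinarith [norm_nonneg (f w)])
  have hsub : Tendsto (fun w ↦ (w - z) • T (f w)) (𝓝 z) (𝓝 0) :=
    (tendsto_sub_nhds_zero_iff.2 tendsto_id).zero_smul_isBoundedUnder_le ⟨_, hbdd⟩
  refine tendsto_sub_nhds_zero_iff.1 (hsub.congr' ?_)
  filter_upwards [h] with w hw
  rw [hw, ← neg_sub z w, neg_smul]; abel

theorem comp_resolvent_eq_resolvent_comp_of_map_poisson {𝕜 E F Φ : Type*}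
    [NontriviallyNormedField 𝕜] [NormedAddCommGroup E] [NormedSpace 𝕜 E]
    [NormedAddCommGroup F] [NormedSpace 𝕜 F] {Ω : Set 𝕜} (hΩ : IsOpen Ω) (U : E →L[𝕜] F)
    (R₁ : 𝕜 → E →L[𝕜] E) (R₂ : 𝕜 → F →L[𝕜] F) (γ₁ : 𝕜 → Φ → E) (γ₂ : 𝕜 → Φ → F)
    (hres₁ : ∀ lam mu : 𝕜, lam ∈ Ω → mu ∈ Ω → ∀ φ : Φ,
      γ₁ lam φ = γ₁ mu φ + (lam - mu) • R₁ lam (γ₁ mu φ))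
    (hres₂ : ∀ lam mu : 𝕜, lam ∈ Ω → mu ∈ Ω → ∀ φ : Φ,
      γ₂ lam φ = γ₂ mu φ + (lam - mu) • R₂ lam (γ₂ mu φ))
    (hdense : Dense (span 𝕜 {x : E | ∃ lam : 𝕜, ∃ φ : Φ, lam ∈ Ω ∧ γ₁ lam φ = x} : Set E))
    (hU : ∀ lam ∈ Ω, ∀ φ : Φ, U (γ₁ lam φ) = γ₂ lam φ) {lam : 𝕜} (hlam : lam ∈ Ω) :
    U ∘L R₁ lam = R₂ lam ∘L U := by
  have hoff : ∀ mu ∈ Ω, mu ≠ lam → ∀ ψ : Φ, U (R₁ lam (γ₁ mu ψ)) = R₂ lam (U (γ₁ mu ψ)) := by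
    intro mu hmu hne ψ
    have hc : lam - mu ≠ 0 := sub_ne_zero.2 hne.symm
    rw [(eq_inv_smul_iff₀ hc).2 (eq_sub_of_add_eq' (hres₁ lam mu hlam hmu ψ).symm), hU mu hmu ψ,
      (eq_inv_smul_iff₀ hc).2 (eq_sub_of_add_eq' (hres₂ lam mu hlam hmu ψ).symm), map_smul,
      map_sub, hU lam hlam ψ, hU mu hmu ψ]
  refine ContinuousLinearMap.ext_on hdense ?_
  rintro _ ⟨mu, ψ, hmu, rfl⟩
  rcases ne_or_eq mu lam with hne | rfl
  · exact hoff mu hmu hne ψ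
  -- `γ₁ · ψ` is continuous at `mu`, so `γ₁ mu ψ` is a limit of the vectors handled by `hoff`.
  have hcont : ContinuousAt (γ₁ · ψ) mu := continuousAt_of_eq_add_smul_apply (R₁ mu)
    (by filter_upwards [hΩ.mem_nhds hmu] with w hw using hres₁ mu w hmu hw ψ)
  refine (isClosed_eq (by fun_prop) (by fun_prop)).mem_of_tendsto
    (hcont.tendsto.mono_left (nhdsWithin_le_nhds (s := {mu}ᶜ))) ?_
  filter_upwards [nhdsWithin_le_nhds (hΩ.mem_nhds hmu), self_mem_nhdsWithin] with w hw hne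
  exact hoff w hw hne ψ

theorem LinearPMap.exists_apply_eq_map_of_map_resolvent {𝕜 E F : Type*} [Field 𝕜]
    [AddCommGroup E] [Module 𝕜 E] [AddCommGroup F] [Module 𝕜 F]
    {A₁ : E →ₗ.[𝕜] E} {A₂ : F →ₗ.[𝕜] F} (U : E →ₗ[𝕜] F) {R₁ : E → E} {R₂ : F → F} {c : 𝕜}
    (h₁ : ∀ x : A₁.domain, R₁ (A₁ x - c • (x : E)) = x)
    (h₂ : ∀ y : F, ∃ x : A₂.domain, (x : F) = R₂ y ∧ A₂ x - c • (x : F) = y)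
    (hU : ∀ u : E, U (R₁ u) = R₂ (U u)) (u : A₁.domain) :
    ∃ v : A₂.domain, (v : F) = U u ∧ A₂ v = U (A₁ u) := by
  obtain ⟨v, hv, hAv⟩ := h₂ (U (A₁ u - c • (u : E)))
  have hvu : (v : F) = U u := by rw [hv, ← hU, h₁]
  refine ⟨v, hvu, ?_⟩
  calc A₂ v = (A₂ v - c • (v : F)) + c • (v : F) := (sub_add_cancel _ _).symm
    _ = U (A₁ u) := by rw [hAv, hvu, U.map_sub, U.map_smul, sub_add_cancel]

theorem unitary_equivalence_from_poisson_data_general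
    {H Φ : Type*} [NormedAddCommGroup H] [InnerProductSpace ℂ H] [CompleteSpace H]
    (A₁ A₂ : H →ₗ.[ℂ] H)
    (R₁ R₂ : ℂ → H →L[ℂ] H)
    (hR₁ : ∀ lam : ℂ, lam.im ≠ 0 →
      (∀ x : A₁.domain, R₁ lam (A₁ x - lam • (x : H)) = x) ∧
      (∀ y : H, ∃ x : A₁.domain, (x : H) = R₁ lam y ∧ A₁ x - lam • (x : H) = y))
    (hR₂ : ∀ lam : ℂ, lam.im ≠ 0 →
      (∀ x : A₂.domain, R₂ lam (A₂ x - lam • (x : H)) = x) ∧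
      (∀ y : H, ∃ x : A₂.domain, (x : H) = R₂ lam y ∧ A₂ x - lam • (x : H) = y))
    (γ₁ γ₂ : ℂ → Φ → H)
    (hres₁ : ∀ lam mu : ℂ, lam.im ≠ 0 → mu.im ≠ 0 → ∀ φ : Φ,
      γ₁ lam φ = γ₁ mu φ + (lam - mu) • R₁ lam (γ₁ mu φ))
    (hres₂ : ∀ lam mu : ℂ, lam.im ≠ 0 → mu.im ≠ 0 → ∀ φ : Φ,
      γ₂ lam φ = γ₂ mu φ + (lam - mu) • R₂ lam (γ₂ mu φ))
    (hdense₁ : Dense (↑(Submodule.span ℂ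
      {x : H | ∃ lam : ℂ, ∃ φ : Φ, lam.im ≠ 0 ∧ γ₁ lam φ = x}) : Set H))
    (hdense₂ : Dense (↑(Submodule.span ℂ
      {x : H | ∃ lam : ℂ, ∃ φ : Φ, lam.im ≠ 0 ∧ γ₂ lam φ = x}) : Set H))
    (hiso : ∀ lam mu : ℂ, lam.im ≠ 0 → mu.im ≠ 0 → ∀ φ ψ : Φ,
      ⟪γ₁ mu ψ, γ₁ lam φ⟫ = ⟪γ₂ mu ψ, γ₂ lam φ⟫) :
    ∃ U : H ≃ₗᵢ[ℂ] H,
      (∀ lam : ℂ, lam.im ≠ 0 → ∀ φ : Φ, U (γ₁ lam φ) = γ₂ lam φ) ∧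
      (∀ lam : ℂ, lam.im ≠ 0 → ∀ u : H, U (R₁ lam u) = R₂ lam (U u)) ∧
      (∀ u : A₁.domain, ∃ v : A₂.domain, (v : H) = U u ∧ A₂ v = U (A₁ u)) ∧
      (∀ v : A₂.domain, ∃ u : A₁.domain, (u : H) = U.symm v ∧ A₁ u = U.symm (A₂ v)) := by
  have hrange (γ : ℂ → Φ → H) : {x : H | ∃ lam : ℂ, ∃ φ : Φ, lam.im ≠ 0 ∧ γ lam φ = x} =
      Set.range fun i : {p : ℂ × Φ // p.1.im ≠ 0} ↦ γ i.1.1 i.1.2 := by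
    ext x
    simp only [Set.mem_ofPred_eq, Set.mem_range, Subtype.exists, Prod.exists, exists_prop]
  obtain ⟨U, hU⟩ := exists_linearIsometryEquiv_apply_eq_of_inner_eq (𝕜 := ℂ)
    (fun i : {p : ℂ × Φ // p.1.im ≠ 0} ↦ γ₁ i.1.1 i.1.2) (fun i ↦ γ₂ i.1.1 i.1.2)
    (hrange γ₁ ▸ hdense₁) (hrange γ₂ ▸ hdense₂)
    (fun i j ↦ hiso j.1.1 i.1.1 j.2 i.2 j.1.2 i.1.2)
  have hUγ (lam : ℂ) (hlam : lam.im ≠ 0) (φ : Φ) : U (γ₁ lam φ) = γ₂ lam φ := hU ⟨(lam, φ), hlam⟩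
  have hUR (lam : ℂ) (hlam : lam.im ≠ 0) (u : H) : U (R₁ lam u) = R₂ lam (U u) :=
    DFunLike.congr_fun (comp_resolvent_eq_resolvent_comp_of_map_poisson
      (isOpen_ne_fun Complex.continuous_im continuous_const) (U : H →L[ℂ] H)
      R₁ R₂ γ₁ γ₂ hres₁ hres₂ hdense₁ hUγ hlam) u
  have hI : Complex.I.im ≠ 0 := by simp
  have hURsymm (w : H) : U.symm (R₂ Complex.I w) = R₁ Complex.I (U.symm w) :=
    U.symm_apply_eq.2 (by rw [hUR _ hI, U.apply_symm_apply])
  exact ⟨U, hUγ, hUR,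
    LinearPMap.exists_apply_eq_map_of_map_resolvent (U : H →ₗ[ℂ] H) (hR₁ _ hI).1 (hR₂ _ hI).2
      (hUR _ hI),
    LinearPMap.exists_apply_eq_map_of_map_resolvent (U.symm : H →ₗ[ℂ] H) (hR₂ _ hI).1
      (hR₁ _ hI).2 hURsymm⟩

/-- Abstract uniqueness argument: `A₁, A₂` are selfadjoint operators in
`H` with resolvents `R₁, R₂`, and `γ₁, γ₂ : (ℂ \ ℝ) × Φ → H` are abstract Poisson
operators satisfying the resolvent-type identity and having dense spans, such that all
inner products `(γᵢ(λ)φ, γᵢ(μ)ψ)` agree for `i = 1, 2`.  Then the map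
`V : Σⱼ γ₁(λⱼ)φⱼ ↦ Σⱼ γ₂(λⱼ)φⱼ` is well defined and isometric and its closure `U` is a
unitary operator intertwining the two resolvents, `U (A₁-λ)⁻¹ = (A₂-λ)⁻¹ U`, and
`U A₁ = A₂ U`, i.e. `A₁` and `A₂` are unitarily equivalent. -/
theorem unitary_equivalence_from_poisson_data
    {H Φ : Type*} [NormedAddCommGroup H] [InnerProductSpace ℂ H] [CompleteSpace H]
    (A₁ A₂ : H →ₗ.[ℂ] H) (hA₁ : IsSelfAdjoint A₁) (hA₂ : IsSelfAdjoint A₂)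
    (R₁ R₂ : ℂ → H →L[ℂ] H)
    (hR₁ : ∀ lam : ℂ, lam.im ≠ 0 →
      (∀ x : A₁.domain, R₁ lam (A₁ x - lam • (x : H)) = x) ∧
      (∀ y : H, ∃ x : A₁.domain, (x : H) = R₁ lam y ∧ A₁ x - lam • (x : H) = y))
    (hR₂ : ∀ lam : ℂ, lam.im ≠ 0 →
      (∀ x : A₂.domain, R₂ lam (A₂ x - lam • (x : H)) = x) ∧
      (∀ y : H, ∃ x : A₂.domain, (x : H) = R₂ lam y ∧ A₂ x - lam • (x : H) = y))
    (γ₁ γ₂ : ℂ → Φ → H)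
    (hres₁ : ∀ lam mu : ℂ, lam.im ≠ 0 → mu.im ≠ 0 → ∀ φ : Φ,
      γ₁ lam φ = γ₁ mu φ + (lam - mu) • R₁ lam (γ₁ mu φ))
    (hres₂ : ∀ lam mu : ℂ, lam.im ≠ 0 → mu.im ≠ 0 → ∀ φ : Φ,
      γ₂ lam φ = γ₂ mu φ + (lam - mu) • R₂ lam (γ₂ mu φ))
    (hdense₁ : Dense (↑(Submodule.span ℂ
      {x : H | ∃ lam : ℂ, ∃ φ : Φ, lam.im ≠ 0 ∧ γ₁ lam φ = x}) : Set H))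
    (hdense₂ : Dense (↑(Submodule.span ℂ
      {x : H | ∃ lam : ℂ, ∃ φ : Φ, lam.im ≠ 0 ∧ γ₂ lam φ = x}) : Set H))
    (hiso : ∀ lam mu : ℂ, lam.im ≠ 0 → mu.im ≠ 0 → ∀ φ ψ : Φ,
      ⟪γ₁ mu ψ, γ₁ lam φ⟫ = ⟪γ₂ mu ψ, γ₂ lam φ⟫) :
    ∃ U : H ≃ₗᵢ[ℂ] H,
      (∀ lam : ℂ, lam.im ≠ 0 → ∀ φ : Φ, U (γ₁ lam φ) = γ₂ lam φ) ∧
      (∀ lam : ℂ, lam.im ≠ 0 → ∀ u : H, U (R₁ lam u) = R₂ lam (U u)) ∧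
      (∀ u : A₁.domain, ∃ v : A₂.domain, (v : H) = U u ∧ A₂ v = U (A₁ u)) ∧
      (∀ v : A₂.domain, ∃ u : A₁.domain, (u : H) = U.symm v ∧ A₁ u = U.symm (A₂ v)) :=
  unitary_equivalence_from_poisson_data_general A₁ A₂ R₁ R₂ hR₁ hR₂ γ₁ γ₂ hres₁ hres₂ hdense₁
    hdense₂ hiso
end

section
/- In the Calderón-type setting, let λ be an eigenvalue of A, let E_λ be the spectral projection onto ker(A - λ), and let η, μ ∈ ℂ \ ℝ with η ≠ μ̄. Then for all φ, ψ ∈ H^{1/2}(∂Ω): (Res_λ M φ, ψ) = (η - λ)(μ̄ - λ)(E_λ γ(η)φ, γ(μ)ψ)_{L²(Ω)}. -/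
open scoped ComplexConjugate Topology
local notation "⟪" x ", " y "⟫" => @inner ℂ _ _ x y

/-!
Along the vertical path `z = λ + i t`, multiply the resolvent identity
`γ(z)φ = γ(η)φ + (z - η)(A - z)⁻¹γ(η)φ` by `z - λ`. On the eigenspace component `E_λ γ(η)φ` the
resolvent acts as `(λ - z)⁻¹`, which produces the limit `(η - λ) E_λ γ(η)φ`. The remaining
component is orthogonal to `ker (A - λ)`, hence lies in the closure of `ran (A - λ)` since `A` is
self-adjoint; there `(z - λ)(A - z)⁻¹ → 0` strongly, because it tends to `0` on `ran (A - λ)` and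
`‖(A - z)⁻¹‖ ≤ |Im z|⁻¹ = |z - λ|⁻¹`. Pairing with `γ(μ)ψ` and using the second identity,
`(z - λ)((M(z)φ, ψ) - (φ, M(μ)ψ))` tends both to the residue and to the right-hand side.
-/

section

open Filter Complex

lemma tendsto_zero_of_mem_closure_of_eventually_opNorm_le
    {ι 𝕜 E F : Type*} [NontriviallyNormedField 𝕜] [SeminormedAddCommGroup E] [NormedSpace 𝕜 E]
    [SeminormedAddCommGroup F] [NormedSpace 𝕜 F] {f : ι → E →L[𝕜] F} {l : Filter ι} {C : ℝ}
    (hC : ∀ᶠ i in l, ‖f i‖ ≤ C) {S : Set E} (hS : ∀ y ∈ S, Tendsto (fun i => f i y) l (𝓝 0))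
    {x : E} (hx : x ∈ closure S) : Tendsto (fun i => f i x) l (𝓝 0) := by
  rw [Metric.tendsto_nhds]
  intro ε hε
  obtain ⟨y, hyS, hxy⟩ := Metric.mem_closure_iff.1 hx (ε / 2 / (|C| + 1)) (by positivity)
  filter_upwards [hC, Metric.tendsto_nhds.1 (hS y hyS) (ε / 2) (half_pos hε)] with i hCi hyi
  rw [dist_zero_right] at hyi ⊢
  rw [dist_eq_norm, lt_div_iff₀ (by positivity)] at hxy
  calc ‖f i x‖ = ‖f i (x - y) + f i y‖ := by rw [map_sub, sub_add_cancel]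
    _ ≤ ‖f i‖ * ‖x - y‖ + ‖f i y‖ := (norm_add_le _ _).trans (by gcongr; exact (f i).le_opNorm _)
    _ < ε := by nlinarith [le_abs_self C, norm_nonneg (x - y), norm_nonneg (f i)]

lemma tendsto_add_mul_I_nhdsNE (c : ℂ) :
    Tendsto (fun t : ℝ => c + t * I) (𝓝[≠] 0) (𝓝[≠] c) := by
  refine tendsto_nhdsWithin_of_tendsto_nhds_of_eventually_within _ ?_ ?_
  · exact ((by fun_prop : Continuous fun t : ℝ => c + t * I).tendsto' 0 c (by simp)).mono_left
      nhdsWithin_le_nhds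
  · filter_upwards [self_mem_nhdsWithin] with t ht
    simpa using ht

lemma tendsto_ofReal_mul_I_nhdsNE_zero :
    Tendsto (fun t : ℝ => (t : ℂ) * I) (𝓝[≠] 0) (𝓝 0) := by
  simpa using (tendsto_add_mul_I_nhdsNE 0).mono_right nhdsWithin_le_nhds

lemma tendsto_sub_mul_of_eventuallyEq_div_add {h g : ℂ → ℂ} {c a : ℂ} (hg : ContinuousAt g c)
    (hh : ∀ᶠ z in 𝓝[≠] c, h z = a / (z - c) + g z) :
    Tendsto (fun z => (z - c) * h z) (𝓝[≠] c) (𝓝 a) := by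
  have hlim : Tendsto (fun z => a + (z - c) * g z) (𝓝[≠] c) (𝓝 (a + (c - c) * g c)) :=
    tendsto_const_nhds.add (((continuousAt_id.sub continuousAt_const).mul hg).mono_left
      nhdsWithin_le_nhds)
  rw [sub_self, zero_mul, add_zero] at hlim
  refine hlim.congr' ?_
  filter_upwards [hh, self_mem_nhdsWithin] with z hz hzc
  rw [hz, mul_add, mul_div_cancel₀ _ (sub_ne_zero.2 hzc)]

variable {H : Type*} [NormedAddCommGroup H] [InnerProductSpace ℂ H]

namespace IsSelfAdjoint

variable [CompleteSpace H] {A : H →ₗ.[ℂ] H}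

theorem isFormalAdjoint (hA : IsSelfAdjoint A) : A.IsFormalAdjoint A := by
  simpa only [LinearPMap.isSelfAdjoint_def.mp hA] using
    LinearPMap.adjoint_isFormalAdjoint hA.dense_domain (T := A)

theorem exists_apply_eq_of_forall_inner_sub_smul_eq_zero (hA : IsSelfAdjoint A) (c : ℂ) {y : H}
    (hy : ∀ x : A.domain, ⟪A x - c • (x : H), y⟫ = 0) :
    ∃ hyA : y ∈ A.domain, A ⟨y, hyA⟩ = conj c • y := by
  have hadj : ∀ x : A.domain, ⟪conj c • y, (x : H)⟫ = ⟪y, A x⟫ := fun x => by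
    have h := congrArg conj (hy x)
    rw [inner_conj_symm, map_zero, inner_sub_right, inner_smul_right, sub_eq_zero] at h
    rw [inner_smul_left, conj_conj, h]
  have hy' : y ∈ A.adjoint.domain := LinearPMap.mem_adjoint_domain_of_exists y ⟨_, hadj⟩
  have hle : A.adjoint ≤ A := (LinearPMap.isSelfAdjoint_def.mp hA).le
  refine ⟨hle.1 hy', ?_⟩
  rw [← LinearPMap.adjoint_apply_eq hA.dense_domain ⟨y, hy'⟩ hadj]
  exact (hle.2 (x := ⟨y, hy'⟩) (y := ⟨y, hle.1 hy'⟩) rfl).symm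

theorem mem_closure_range_sub_smul (hA : IsSelfAdjoint A) (lam : ℝ) {w : H}
    (hw : ∀ e : A.domain, A e = (lam : ℂ) • (e : H) → ⟪(e : H), w⟫ = 0) :
    w ∈ closure (Set.range fun x : A.domain => A x - (lam : ℂ) • (x : H)) := by
  let K := LinearMap.range (A.toFun - (lam : ℂ) • A.domain.subtype)
  have hK : (K : Set H) = Set.range fun x : A.domain => A x - (lam : ℂ) • (x : H) := by
    rw [LinearMap.coe_range]; rfl
  rw [← hK, ← Submodule.topologicalClosure_coe, ← Submodule.orthogonal_orthogonal_eq_closure]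
  intro u hu
  obtain ⟨huA, hAu⟩ := hA.exists_apply_eq_of_forall_inner_sub_smul_eq_zero lam fun x =>
    (Submodule.mem_orthogonal K u).1 hu _ ⟨x, rfl⟩
  exact hw ⟨u, huA⟩ (by simpa using hAu)

end IsSelfAdjoint

namespace LinearPMap

def IsResolventAt (A : H →ₗ.[ℂ] H) (z : ℂ) (Rz : H →L[ℂ] H) : Prop :=
  (∀ x : A.domain, Rz (A x - z • (x : H)) = x) ∧
    ∀ y : H, ∃ x : A.domain, (x : H) = Rz y ∧ A x - z • (x : H) = y

variable {A : H →ₗ.[ℂ] H}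

theorem IsFormalAdjoint.abs_im_mul_norm_le_s11 (hA : A.IsFormalAdjoint A) (z : ℂ) (x : A.domain) :
    |z.im| * ‖(x : H)‖ ≤ ‖A x - z • (x : H)‖ := by
  have hreal : (⟪(x : H), A x⟫).im = 0 := by
    rw [← Complex.conj_eq_iff_im, inner_conj_symm]
    exact hA x x
  have him : (⟪(x : H), A x - z • (x : H)⟫).im = -(z.im * ‖(x : H)‖ ^ 2) := by
    rw [inner_sub_right, inner_smul_right, inner_self_eq_norm_sq_to_K]
    simp [hreal, ← Complex.ofReal_pow]
  have hsq : |z.im| * ‖(x : H)‖ * ‖(x : H)‖ ≤ ‖A x - z • (x : H)‖ * ‖(x : H)‖ :=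
    calc |z.im| * ‖(x : H)‖ * ‖(x : H)‖ = |(⟪(x : H), A x - z • (x : H)⟫).im| := by
          rw [him, abs_neg, abs_mul, abs_of_nonneg (sq_nonneg ‖(x : H)‖)]; ring
      _ ≤ ‖⟪(x : H), A x - z • (x : H)⟫‖ := Complex.abs_im_le_norm _
      _ ≤ ‖A x - z • (x : H)‖ * ‖(x : H)‖ := by rw [mul_comm]; exact norm_inner_le_norm _ _
  rcases (norm_nonneg (x : H)).eq_or_lt with hx | hx
  · rw [← hx, mul_zero]; exact norm_nonneg _
  · exact le_of_mul_le_mul_right hsq hx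

namespace IsResolventAt

variable {z : ℂ} {Rz : H →L[ℂ] H}

theorem sub_smul_apply_of_apply_eq (hR : A.IsResolventAt z Rz) {c : ℂ} {x : A.domain}
    (hx : A x = c • (x : H)) : (c - z) • Rz x = x := by
  have h := hR.1 x
  rwa [hx, ← sub_smul, Rz.map_smul] at h

theorem apply_sub_smul (hR : A.IsResolventAt z Rz) (c : ℂ) (x : A.domain) :
    Rz (A x - c • (x : H)) = x + (z - c) • Rz x := by
  calc Rz (A x - c • (x : H)) = Rz (A x - z • (x : H) + (z - c) • (x : H)) := by
        congr 1; module
    _ = x + (z - c) • Rz x := by rw [Rz.map_add, Rz.map_smul, hR.1 x]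

theorem abs_im_mul_norm_apply_le (hR : A.IsResolventAt z Rz) (hA : A.IsFormalAdjoint A)
    (y : H) : |z.im| * ‖Rz y‖ ≤ ‖y‖ := by
  obtain ⟨x, hx, hxy⟩ := hR.2 y
  simpa only [← hx, hxy] using hA.abs_im_mul_norm_le_s11 z x

end IsResolventAt

variable [CompleteSpace H] {lam : ℝ} {R : ℂ → H →L[ℂ] H}

theorem tendsto_smul_resolvent_apply_of_forall_inner_eq_zero (hA : IsSelfAdjoint A)
    (hR : ∀ᶠ t : ℝ in 𝓝[≠] 0, A.IsResolventAt (lam + t * I) (R (lam + t * I))) {w : H}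
    (hw : ∀ e : A.domain, A e = (lam : ℂ) • (e : H) → ⟪(e : H), w⟫ = 0) :
    Tendsto (fun t : ℝ => ((t : ℂ) * I) • R (lam + t * I) w) (𝓝[≠] 0) (𝓝 0) := by
  have hnorm : ∀ᶠ t : ℝ in 𝓝[≠] 0, ∀ y, ‖((t : ℂ) * I) • R (lam + t * I) y‖ ≤ ‖y‖ := by
    filter_upwards [hR] with t ht y
    simpa [norm_smul] using ht.abs_im_mul_norm_apply_le hA.isFormalAdjoint y
  refine tendsto_zero_of_mem_closure_of_eventually_opNorm_le (C := 1)
    (f := fun t : ℝ => ((t : ℂ) * I) • R (lam + t * I)) ?_ ?_ (hA.mem_closure_range_sub_smul lam hw)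
  · filter_upwards [hnorm] with t ht
    exact ContinuousLinearMap.opNorm_le_bound _ zero_le_one fun y => by simpa using ht y
  · rintro _ ⟨u, rfl⟩
    have hbdd : ∀ᶠ t : ℝ in 𝓝[≠] 0,
        ‖(u : H) + ((t : ℂ) * I) • R (lam + t * I) u‖ ≤ 2 * ‖(u : H)‖ := by
      filter_upwards [hnorm] with t ht
      linarith [norm_add_le (u : H) (((t : ℂ) * I) • R (lam + t * I) u), ht u]
    refine (tendsto_ofReal_mul_I_nhdsNE_zero.zero_smul_isBoundedUnder_le
      (isBoundedUnder_of_eventually_le hbdd)).congr' ?_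
    filter_upwards [hR] with t ht
    simp only [_root_.smul_apply, ht.apply_sub_smul, add_sub_cancel_left]

theorem tendsto_smul_of_sub_eq_smul_resolvent (hA : IsSelfAdjoint A)
    (hR : ∀ᶠ t : ℝ in 𝓝[≠] 0, A.IsResolventAt (lam + t * I) (R (lam + t * I)))
    {f : ℂ → H} {eta : ℂ}
    (hf : ∀ᶠ t : ℝ in 𝓝[≠] 0,
      f (lam + t * I) - f eta = (lam + t * I - eta) • R (lam + t * I) (f eta))
    {e : A.domain} (he : A e = (lam : ℂ) • (e : H))
    (hperp : ∀ x : A.domain, A x = (lam : ℂ) • (x : H) → ⟪(x : H), f eta - e⟫ = 0) :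
    Tendsto (fun t : ℝ => ((t : ℂ) * I) • f (lam + t * I)) (𝓝[≠] 0)
      (𝓝 ((eta - lam) • (e : H))) := by
  have hpath : Tendsto (fun t : ℝ => (lam : ℂ) + t * I) (𝓝[≠] 0) (𝓝 lam) :=
    (tendsto_add_mul_I_nhdsNE _).mono_right nhdsWithin_le_nhds
  have hcomplement := tendsto_smul_resolvent_apply_of_forall_inner_eq_zero hA hR hperp
  have hlim := ((tendsto_ofReal_mul_I_nhdsNE_zero.smul_const (f eta)).add
    ((hpath.sub_const eta).smul hcomplement)).sub ((hpath.sub_const eta).smul_const (e : H))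
  rw [zero_smul, smul_zero, zero_add, zero_sub, ← neg_smul, neg_sub] at hlim
  refine hlim.congr' ?_
  filter_upwards [hR, hf] with t hRt hft
  have hRe := hRt.sub_smul_apply_of_apply_eq he
  rw [sub_add_cancel_left] at hRe
  rw [sub_eq_iff_eq_add'] at hft
  have hsplit : R (lam + t * I) (f eta) = R (lam + t * I) e + R (lam + t * I) (f eta - e) := by
    rw [← ContinuousLinearMap.map_add, add_sub_cancel]
  rw [hft, hsplit]
  linear_combination (norm := module) (lam + t * I - eta) • hRe

end LinearPMap

end

theorem residue_of_dtn_formula_general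
    {H B Bm : Type*} [NormedAddCommGroup H] [InnerProductSpace ℂ H] [CompleteSpace H]
    [AddCommGroup B] [Module ℂ B] [AddCommGroup Bm] [Module ℂ Bm]
    (p : Bm →ₗ[ℂ] B →ₗ[ℂ] ℂ)
    (T : H →ₗ.[ℂ] H)
    (ntr : T.domain →ₗ[ℂ] Bm)
    (A : H →ₗ.[ℂ] H) (hA : IsSelfAdjoint A)
    (ρ : Set ℂ) (R : ℂ → H →L[ℂ] H)
    (hR : ∀ z ∈ ρ, (∀ x : A.domain, R z (A x - z • (x : H)) = x) ∧
      (∀ y : H, ∃ x : A.domain, (x : H) = R z y ∧ A x - z • (x : H) = y))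
    (γ : ℂ → B → T.domain)
    (hkey1 : ∀ z ∈ ρ, ∀ w ∈ ρ, ∀ φ : B,
      (γ z φ : H) - (γ w φ : H) = (z - w) • R z ((γ w φ : H)))
    (hkey2 : ∀ z ∈ ρ, ∀ w ∈ ρ, ∀ φ ψ : B,
      (conj w - z) * ⟪(γ w ψ : H), (γ z φ : H)⟫ =
        p (ntr (γ z φ)) ψ - conj (p (ntr (γ w ψ)) φ))
    (lam : ℝ)
    (hpunct : ∀ᶠ z in 𝓝[≠] (lam : ℂ), z ∈ ρ)
    (P : H →L[ℂ] H)
    (hPran : ∀ x : H, ∃ px : A.domain, (px : H) = P x ∧ A px = (lam : ℂ) • P x)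
    (hPfix : ∀ x : A.domain, A x = (lam : ℂ) • (x : H) → P (x : H) = x)
    (hPsym : ∀ x y : H, ⟪P x, y⟫ = ⟪x, P y⟫)
    (ResM : B → Bm)
    (hRes : ∀ φ ψ : B, ∃ g : ℂ → ℂ, AnalyticAt ℂ g (lam : ℂ) ∧
      ∀ᶠ z in 𝓝[≠] (lam : ℂ),
        p (ntr (γ z φ)) ψ = p (ResM φ) ψ / (z - (lam : ℂ)) + g z)
    (eta mu : ℂ) (heta : eta ∈ ρ) (hmu : mu ∈ ρ) :
    ∀ φ ψ : B,
      p (ResM φ) ψ =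
        (eta - (lam : ℂ)) * (conj mu - (lam : ℂ)) * ⟪(γ mu ψ : H), P ((γ eta φ : H))⟫ := by
  intro φ ψ
  have hpath := tendsto_add_mul_I_nhdsNE (lam : ℂ)
  have hρ : ∀ᶠ t : ℝ in 𝓝[≠] 0, (lam : ℂ) + t * Complex.I ∈ ρ := hpath.eventually hpunct
  obtain ⟨e, he, hAe⟩ := hPran (γ eta φ)
  have hperp : ∀ x : A.domain, A x = (lam : ℂ) • (x : H) → ⟪(x : H), (γ eta φ : H) - e⟫ = 0 :=
    fun x hx => by rw [inner_sub_right, he, ← hPsym, hPfix x hx, sub_self]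
  have hpoisson := A.tendsto_smul_of_sub_eq_smul_resolvent hA (hρ.mono fun t ht => hR _ ht)
    (f := fun z => (γ z φ : H)) (hρ.mono fun t ht => hkey1 _ ht eta heta φ)
    (he ▸ hAe) hperp
  obtain ⟨g, hg, hres⟩ := hRes φ ψ
  have hresidue := (tendsto_sub_mul_of_eventuallyEq_div_add
    (h := fun z => p (ntr (γ z φ)) ψ - conj (p (ntr (γ mu ψ)) φ)) (a := p (ResM φ) ψ)
    (hg.continuousAt.sub continuousAt_const)
    (hres.mono fun z hz => by rw [hz, Pi.sub_apply, add_sub_assoc])).comp hpath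
  have hinner := ((tendsto_const_nhds (x := conj mu)).sub (hpath.mono_right nhdsWithin_le_nhds)).mul
    (((innerSL ℂ (γ mu ψ : H)).continuous.tendsto _).comp hpoisson)
  refine (tendsto_nhds_unique hresidue (hinner.congr' ?_)).trans ?_
  · filter_upwards [hρ] with t ht
    simp only [Function.comp_apply, innerSL_apply_apply, inner_smul_right, add_sub_cancel_left,
      ← hkey2 _ ht mu hmu φ ψ]
    ring
  · rw [innerSL_apply_apply, inner_smul_right, he]
    ring

/-- Abstract Calderón-type model.  Let `λ ∈ ℝ` be an eigenvalue of the
Dirichlet operator `A`, `E_λ = P` the orthogonal projection onto `ker (A - λ)`, and let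
`η, μ ∈ ℂ \ ℝ` with `η ≠ μ̄` lie in the resolvent set `ρ`.  Let `Res_λ M : B → Bm` be the
residue of the (meromorphic, simple-pole) Dirichlet-to-Neumann map
`ζ ↦ M(ζ)φ = ntr (γ(ζ)φ)` at `λ`.  Then for all `φ, ψ ∈ H^{1/2}(∂Ω)`:
`(Res_λ M φ, ψ) = (η - λ)(μ̄ - λ)(E_λ γ(η)φ, γ(μ)ψ)_{L²(Ω)}`  (paper pairing
`(a,b)_{L²} = ⟪b,a⟫` in Mathlib's convention). -/
theorem residue_of_dtn_formula
    {H B Bm : Type*} [NormedAddCommGroup H] [InnerProductSpace ℂ H] [CompleteSpace H]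
    [AddCommGroup B] [Module ℂ B] [AddCommGroup Bm] [Module ℂ Bm]
    (p : Bm →ₗ[ℂ] B →ₗ[ℂ] ℂ)
    (T : H →ₗ.[ℂ] H)
    (tr : T.domain →ₗ[ℂ] B) (ntr : T.domain →ₗ[ℂ] Bm)
    (A : H →ₗ.[ℂ] H) (hA : IsSelfAdjoint A) (hAT : A ≤ T)
    (hAdom : ∀ u : T.domain, ((u : H) ∈ A.domain ↔ tr u = 0))
    (ρ : Set ℂ) (R : ℂ → H →L[ℂ] H)
    (hR : ∀ z ∈ ρ, (∀ x : A.domain, R z (A x - z • (x : H)) = x) ∧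
      (∀ y : H, ∃ x : A.domain, (x : H) = R z y ∧ A x - z • (x : H) = y))
    (γ : ℂ → B → T.domain)
    (hγ : ∀ z ∈ ρ, ∀ φ : B, T (γ z φ) = z • ((γ z φ : H)) ∧ tr (γ z φ) = φ)
    (hkey1 : ∀ z ∈ ρ, ∀ w ∈ ρ, ∀ φ : B,
      (γ z φ : H) - (γ w φ : H) = (z - w) • R z ((γ w φ : H)))
    (hkey2 : ∀ z ∈ ρ, ∀ w ∈ ρ, ∀ φ ψ : B,
      (conj w - z) * ⟪(γ w ψ : H), (γ z φ : H)⟫ =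
        p (ntr (γ z φ)) ψ - conj (p (ntr (γ w ψ)) φ))
    (lam : ℝ) (hev : ∃ x : A.domain, (x : H) ≠ 0 ∧ A x = (lam : ℂ) • (x : H))
    (hpunct : ∀ᶠ z in 𝓝[≠] (lam : ℂ), z ∈ ρ)
    (P : H →L[ℂ] H)
    (hPran : ∀ x : H, ∃ px : A.domain, (px : H) = P x ∧ A px = (lam : ℂ) • P x)
    (hPfix : ∀ x : A.domain, A x = (lam : ℂ) • (x : H) → P (x : H) = x)
    (hPsym : ∀ x y : H, ⟪P x, y⟫ = ⟪x, P y⟫)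
    (ResM : B → Bm)
    (hRes : ∀ φ ψ : B, ∃ g : ℂ → ℂ, AnalyticAt ℂ g (lam : ℂ) ∧
      ∀ᶠ z in 𝓝[≠] (lam : ℂ),
        p (ntr (γ z φ)) ψ = p (ResM φ) ψ / (z - (lam : ℂ)) + g z)
    (eta mu : ℂ) (heta : eta ∈ ρ) (hmu : mu ∈ ρ)
    (hetaim : eta.im ≠ 0) (hmuim : mu.im ≠ 0) (hne : eta ≠ conj mu) :
    ∀ φ ψ : B,
      p (ResM φ) ψ =
        (eta - (lam : ℂ)) * (conj mu - (lam : ℂ)) * ⟪(γ mu ψ : H), P ((γ eta φ : H))⟫ :=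
  residue_of_dtn_formula_general p T ntr A hA ρ R hR γ hkey1 hkey2 lam hpunct P hPran hPfix hPsym
    ResM hRes eta mu heta hmu
end
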